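/- arXiv:1602.04443 — 2 statements merged into one kernel-verified Lean document; each statement's English description precedes it below -/
import Mathlib

section
/- Fix t̃ > −1/2 and set p = (1+t̃)/(1+2t̃). Then for any (A, C) with C > 0 on the circle passing through (1/2, 0) and (p, 0) centered on the A-axis (i.e. with center ((1/2+p)/2, 0) and radius |p − 1/2|/2), one has ((2A−1)(1−A) − 2C²)/((2A−1)² + 4C²) = t̃. -/
/-!
On the circle with diameter `[1/2, p]` on the `A`-axis one has `C² = -(A - 1/2)(A - p)`.
Substituting this, numerator and denominator of the twist share the factor `2A - 1`, which is
nonzero off the axis, and the twist collapses to `(1 - p)/(2p - 1)`; the Möbius map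
`t ↦ (1 + t)/(1 + 2t)` is inverted by exactly this expression.
-/

noncomputable def twist (A C : ℝ) : ℝ := ((2*A - 1)*(1 - A) - 2*C^2) / ((2*A - 1)^2 + 4*C^2)

lemma circle_center_radius_iff (a b A C : ℝ) :
    (A - (a + b)/2)^2 + C^2 = ((b - a)/2)^2 ↔ (A - a)*(A - b) + C^2 = 0 := by
  constructor <;> intro h <;> linear_combination h

lemma twist_eq_of_circle {p A C : ℝ} (hC : C ≠ 0) (hcirc : (A - 1/2)*(A - p) + C^2 = 0) :
    twist A C = (1 - p)/(2*p - 1) := by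
  have hA : 2*A - 1 ≠ 0 := by
    intro hA
    have hC2 : C^2 = 0 := by linear_combination hcirc - (A - p)/2 * hA
    exact hC (pow_eq_zero_iff two_ne_zero |>.mp hC2)
  have hnum : (2*A - 1)*(1 - A) - 2*C^2 = (2*A - 1)*(1 - p) := by linear_combination -2 * hcirc
  have hden : (2*A - 1)^2 + 4*C^2 = (2*A - 1)*(2*p - 1) := by linear_combination 4 * hcirc
  rw [twist, hnum, hden, mul_div_mul_left _ _ hA]

lemma one_sub_div_two_mul_sub_one_at_moebius {t : ℝ} (ht : 1 + 2*t ≠ 0) :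
    (1 - (1 + t)/(1 + 2*t))/(2*((1 + t)/(1 + 2*t)) - 1) = t := by
  have hnum : 1 - (1 + t)/(1 + 2*t) = t/(1 + 2*t) := by
    rw [eq_div_iff ht, sub_mul, div_mul_cancel₀ _ ht]; ring
  have hden : 2*((1 + t)/(1 + 2*t)) - 1 = 1/(1 + 2*t) := by
    rw [eq_div_iff ht, sub_mul, mul_assoc, div_mul_cancel₀ _ ht]; ring
  rw [hnum, hden, div_div_div_cancel_right₀ ht, div_one]

/-- Any point `(A,C)` with `C > 0` on the circle through `(1/2,0)` and `(p,0)`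
centered on the `A`-axis, where `p = (1+t̃)/(1+2t̃)`, has unreduced twist `t̃`. -/
theorem stmt6 (t : ℝ) (ht : -1/2 < t) (A C : ℝ) (hC : 0 < C)
    (hcirc : (A - (1/2 + (1+t)/(1+2*t))/2)^2 + C^2
      = (((1+t)/(1+2*t) - 1/2)/2)^2) :
    ((2*A - 1)*(1 - A) - 2*C^2) / ((2*A - 1)^2 + 4*C^2) = t := by
  rw [circle_center_radius_iff] at hcirc
  change twist A C = t
  rw [twist_eq_of_circle hC.ne' hcirc]
  exact one_sub_div_two_mul_sub_one_at_moebius (by linarith)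
end

section
/- Fix t̃ ∈ ℝ with t̃ > −1/2, and let p = (1+t̃)/(1+2t̃), r = (p − 1/2)/2, c = (1/2 + p)/2. Parametrize the upper half-circle by γ(θ) = (c + r·cos θ, r·sin θ) for θ ∈ (0, π). Then as θ → π, γ(θ) → (1/2, 0), and for every θ ∈ (0, π) the point (A, C) = γ(θ) has C > 0 and satisfies ((2A−1)(1−A) − 2C²)/((2A−1)² + 4C²) = t̃. -/
/-!
With `r = 1/(4(1+2t̃))` the path is the circle of radius `r` centred at `(1/2 + r, 0)`, which
passes through `(1/2, 0)` at `θ = π`. On that circle `2A - 1 = 2r(1 + cos θ)`, so numerator and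
denominator of the twist both factor through `1 + cos θ`, and the twist is the constant
`(1 - 4r)/(8r) = t̃`.
-/

open Filter Topology Real

noncomputable def unreducedTwist (A C : ℝ) : ℝ :=
  ((2*A - 1)*(1 - A) - 2*C^2) / ((2*A - 1)^2 + 4*C^2)

theorem unreducedTwist_circle {r θ : ℝ} (hr : r ≠ 0) (hθ : cos θ ≠ -1) :
    unreducedTwist (1/2 + r + r * cos θ) (r * sin θ) = (1 - 4*r) / (8*r) := by
  have hcos : 1 + cos θ ≠ 0 := fun h => hθ (by linarith)
  have hden : (2*(1/2 + r + r * cos θ) - 1)^2 + 4*(r * sin θ)^2 = 8*r^2*(1 + cos θ) := by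
    linear_combination (4*r^2) * sin_sq_add_cos_sq θ
  rw [unreducedTwist, hden, div_eq_div_iff (by positivity) (by positivity)]
  linear_combination (-16*r^3) * sin_sq_add_cos_sq θ

theorem tendsto_circle_nhdsLT_pi (c r : ℝ) :
    Tendsto (fun θ => (c + r * cos θ, r * sin θ)) (𝓝[<] π) (𝓝 (c - r, 0)) := by
  have hcont : Continuous fun θ => (c + r * cos θ, r * sin θ) := by fun_prop
  simpa [sub_eq_add_neg] using (hcont.tendsto π).mono_left nhdsWithin_le_nhds

/-- The explicit half-circle path of constant twist `t̃`: with `p = (1+t̃)/(1+2t̃)`,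
`r = (p−1/2)/2`, `c = (1/2+p)/2` and `γ(θ) = (c + r·cos θ, r·sin θ)`, one has
`γ(θ) → (1/2, 0)` as `θ → π`, and for each `θ ∈ (0, π)` the point `γ(θ)` has
positive second coordinate and unreduced twist equal to `t̃`. -/
theorem stmt19 (t : ℝ) (ht : -1/2 < t) :
    let p : ℝ := (1 + t)/(1 + 2*t)
    let r : ℝ := (p - 1/2)/2
    let c : ℝ := (1/2 + p)/2
    let γ : ℝ → ℝ × ℝ := fun θ => (c + r * Real.cos θ, r * Real.sin θ)
    Filter.Tendsto γ (nhdsWithin Real.pi (Set.Iio Real.pi))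
      (nhds ((1:ℝ)/2, (0:ℝ))) ∧
    ∀ θ ∈ Set.Ioo 0 Real.pi, 0 < (γ θ).2 ∧
      ((2*(γ θ).1 - 1)*(1 - (γ θ).1) - 2*((γ θ).2)^2) /
        ((2*(γ θ).1 - 1)^2 + 4*((γ θ).2)^2) = t := by
  intro p r c γ
  have hpos : 0 < 1 + 2*t := by linarith
  have hr : r = 1 / (4*(1 + 2*t)) := by
    simp only [r, p]
    rw [div_sub' hpos.ne']
    field_simp
    ring
  have hr0 : 0 < r := by rw [hr]; positivity
  have hc : c = 1/2 + r := by simp only [c, r]; ring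
  refine ⟨?_, fun θ ⟨hθ0, hθπ⟩ => ⟨mul_pos hr0 (sin_pos_of_pos_of_lt_pi hθ0 hθπ), ?_⟩⟩
  · have hcr : c - r = 1/2 := by rw [hc]; ring
    simpa only [hcr] using tendsto_circle_nhdsLT_pi c r
  · have hθ : cos θ ≠ -1 := by
      have := cos_lt_cos_of_nonneg_of_le_pi hθ0.le le_rfl hθπ
      rw [cos_pi] at this
      exact this.ne'
    change unreducedTwist (c + r * cos θ) (r * sin θ) = t
    rw [hc, unreducedTwist_circle hr0.ne' hθ, hr]
    field_simp
    ring
end
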